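/- Let F and F' be n+1-frames and f a surjective n+1-π-morphism from F to F'. Then every modal formula valid in F is valid in F'. -/
import Mathlib


/-- Modal many-valued formulas over countably many propositional variables. -/
inductive MForm : Type
  | var : ℕ → MForm
  | neg : MForm → MForm
  | oplus : MForm → MForm → MForm
  | box : MForm → MForm

/-- Derived connectives. -/
def MForm.imp (φ ψ : MForm) : MForm := .oplus ψ (.neg φ)
def MForm.odot (φ ψ : MForm) : MForm := .neg (.oplus (.neg φ) (.neg ψ))
def MForm.or (φ ψ : MForm) : MForm := (φ.imp ψ).imp ψ
def MForm.and (φ ψ : MForm) : MForm := .neg (MForm.or (.neg φ) (.neg ψ))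
def MForm.dia (φ : MForm) : MForm := .neg (.box (.neg φ))

/-- A many-valued Kripke model: a nonempty set of worlds, an accessibility
relation and a `[0,1]`-valued valuation of the propositional variables. -/
structure KModel where
  W : Type
  nonempty : Nonempty W
  R : W → W → Prop
  v : ℕ → W → ℝ
  hv : ∀ p w, v p w ∈ Set.Icc (0:ℝ) 1

/-- Extension of a valuation to formulas, with the Łukasiewicz operations
interpreted pointwise and `□` interpreted as the infimum of the values at the
accessible worlds (`1` if there is no accessible world: inserting `1` into the
set does not change the infimum of a nonempty set of values in `[0,1]`). -/
noncomputable def mval {W : Type} (R : W → W → Prop) (v : ℕ → W → ℝ) :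
    MForm → W → ℝ
  | .var p, w => v p w
  | .neg φ, w => 1 - mval R v φ w
  | .oplus φ ψ, w => min 1 (mval R v φ w + mval R v ψ w)
  | .box φ, w => sInf (insert 1 {x | ∃ w', R w w' ∧ x = mval R v φ w'})

/-- Value of a formula in a Kripke model. -/
noncomputable def KModel.val (M : KModel) (φ : MForm) (w : M.W) : ℝ :=
  mval M.R M.v φ w

/-- The set `Ł_m = {k/m : 0 ≤ k ≤ m}`. -/
def Lukn (m : ℕ) : Set ℝ := {x | ∃ k : ℕ, k ≤ m ∧ x = (k : ℝ) / m}

/-- An `n+1`-frame: a set of worlds together with subsets `r m` for each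
divisor `m` of `n` and an accessibility relation, such that
`r m ∩ r k = r (gcd m k)`, `r n = W`, and successors of worlds of `r m` lie
in `r m`. -/
structure NFrame (n : ℕ) where
  W : Type
  r : ℕ → Set W
  R : W → W → Prop
  inter : ∀ m k, m ∣ n → k ∣ n → r m ∩ r k = r (Nat.gcd m k)
  top : r n = Set.univ
  closed : ∀ m, m ∣ n → ∀ u ∈ r m, ∀ v, R u v → v ∈ r m

/-- A valuation giving a model based on the `n+1`-frame `F`: worlds of `r m`
take values in `Ł_m`. -/
def IsBasedVal {n : ℕ} (F : NFrame n) (v : ℕ → F.W → ℝ) : Prop :=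
  ∀ m, m ∣ n → ∀ w ∈ F.r m, ∀ p, v p w ∈ Lukn m

/-- A formula is valid in an `n+1`-frame if it takes the value `1` at every
world of every model based on that frame. -/
def ValidIn {n : ℕ} (F : NFrame n) (φ : MForm) : Prop :=
  ∀ v : ℕ → F.W → ℝ, IsBasedVal F v → ∀ w : F.W, mval F.R v φ w = 1

/-- An `n+1`-π-morphism between `n+1`-frames. -/
def IsPiMorphism {n : ℕ} (F F' : NFrame n) (f : F.W → F'.W) : Prop :=
  (∀ u v, F.R u v → F'.R (f u) (f v)) ∧
  (∀ u v', F'.R (f u) v' → ∃ v, F.R u v ∧ f v = v') ∧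
  (∀ m, m ∣ n → ∀ u ∈ F.r m, f u ∈ F'.r m)

/-- Validity is preserved under surjective `n+1`-π-morphic images: if `f` is a
surjective `n+1`-π-morphism from `F` onto `F'`, then every formula valid in
`F` is valid in `F'`. -/
theorem validity_preserved_by_pi_morphism {n : ℕ} (hn : 0 < n)
    (F F' : NFrame n) (f : F.W → F'.W) (hsurj : Function.Surjective f)
    (hpi : IsPiMorphism F F' f) (φ : MForm) (hval : ValidIn F φ) :
    ValidIn F' φ := by
  obtain ⟨hforth, hback, hr⟩ := hpi
  intro v' hv' w'
  -- pull back the valuation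
  set v : ℕ → F.W → ℝ := fun p w => v' p (f w) with hvdef
  have hkey : ∀ (ψ : MForm) (w : F.W), mval F.R v ψ w = mval F'.R v' ψ (f w) := by
    intro ψ
    induction ψ with
    | var p => intro w; rfl
    | neg χ ih => intro w; simp [mval, ih]
    | oplus χ₁ χ₂ ih1 ih2 => intro w; simp [mval, ih1, ih2]
    | box χ ih =>
        intro w
        simp only [mval]
        congr 1
        ext x
        simp only [Set.mem_insert_iff, Set.mem_setOf_eq]
        constructor
        · rintro (h | ⟨w2, hR, rfl⟩)
          · exact Or.inl h
          · exact Or.inr ⟨f w2, hforth _ _ hR, ih w2⟩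
        · rintro (h | ⟨w2', hR, rfl⟩)
          · exact Or.inl h
          · obtain ⟨w2, hR2, rfl⟩ := hback _ _ hR
            exact Or.inr ⟨w2, hR2, (ih w2).symm⟩
  have hbased : IsBasedVal F v := by
    intro m hm w hw p
    exact hv' m hm (f w) (hr m hm w hw) p
  obtain ⟨w, rfl⟩ := hsurj w'
  rw [← hkey]
  exact hval v hbased w
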